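/- Let E ⊆ ℝ² be a bounded open set with 0 < vol(E) < ∞, let γ > 0, let q_1, …, q_n ∈ ℝ² (n ≥ 1), q̄ := (1/n) Σ q_i, and let α ∈ ℝ. For sufficiently regular u, v define the Virtual Element bilinear form ã^E(u,v) := a^E(π_C u, π_C v) + α Σ_{i=1}^n (u − π_P u)(q_i) · (v − π_P v)(q_i), where π_R u := (1/n) Σ_i u(q_i), π_C u(x) := ⟨∇u⟩·(x − q̄) and π_P u := π_R u + π_C u. Then ã^E is polynomially consistent: for every affine function p(x) = a + ⟨b, x⟩ and every v : ℝ² → ℝ continuously differentiable on a neighborhood of closure(E), one has ã^E(p, v) = a^E(p, v). In particular π_P p = p for every affine p. -/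

import Mathlib

open MeasureTheory

noncomputable section

/-- The local energy bilinear form `a^E(u, v) = γ ∫_E ⟨∇u, ∇v⟩ dx` on a planar
element `E`. -/
def aE (E : Set (EuclideanSpace ℝ (Fin 2))) (γ : ℝ)
    (u v : EuclideanSpace ℝ (Fin 2) → ℝ) : ℝ :=
  γ * ∫ x in E, (inner ℝ (gradient u x) (gradient v x) : ℝ)

/-- The mean gradient `⟨∇v⟩ = (1/vol E) ∫_E ∇v dx`. -/
def meanGrad (E : Set (EuclideanSpace ℝ (Fin 2)))
    (v : EuclideanSpace ℝ (Fin 2) → ℝ) : EuclideanSpace ℝ (Fin 2) :=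
  (volume E).toReal⁻¹ • ∫ x in E, gradient v x

/-- The projection `π_C v (x) = ⟨∇v⟩ · (x - q̄)` onto zero-mean affine functions. -/
def piC (E : Set (EuclideanSpace ℝ (Fin 2))) (qbar : EuclideanSpace ℝ (Fin 2))
    (v : EuclideanSpace ℝ (Fin 2) → ℝ) : EuclideanSpace ℝ (Fin 2) → ℝ :=
  fun x => (inner ℝ (meanGrad E v) (x - qbar) : ℝ)

/-- The vertex-average projection `π_R v = (1/n) ∑ v(q_i)` onto constants. -/
def piR (n : ℕ) (q : Fin n → EuclideanSpace ℝ (Fin 2))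
    (v : EuclideanSpace ℝ (Fin 2) → ℝ) : ℝ :=
  (n : ℝ)⁻¹ * ∑ i, v (q i)

/-- The projection `π_P v = π_R v + π_C v` onto affine functions, the base point being
the vertex average `q̄ = (1/n) ∑ q_i`. -/
def piP (E : Set (EuclideanSpace ℝ (Fin 2))) (n : ℕ)
    (q : Fin n → EuclideanSpace ℝ (Fin 2))
    (v : EuclideanSpace ℝ (Fin 2) → ℝ) : EuclideanSpace ℝ (Fin 2) → ℝ :=
  fun x => piR n q v + piC E ((n : ℝ)⁻¹ • ∑ i, q i) v x

/-- The stabilized Virtual Element bilinear form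
`ã^E(u,v) = a^E(π_C u, π_C v) + α ∑_i (u - π_P u)(q_i) (v - π_P v)(q_i)`. -/
def atildeE (E : Set (EuclideanSpace ℝ (Fin 2))) (γ α : ℝ) (n : ℕ)
    (q : Fin n → EuclideanSpace ℝ (Fin 2))
    (u v : EuclideanSpace ℝ (Fin 2) → ℝ) : ℝ :=
  aE E γ (piC E ((n : ℝ)⁻¹ • ∑ i, q i) u) (piC E ((n : ℝ)⁻¹ • ∑ i, q i) v)
    + α * ∑ i, (u (q i) - piP E n q u (q i)) * (v (q i) - piP E n q v (q i))

/-! An affine `p = a + ⟪b, ·⟫` has constant gradient `b`, so `⟨∇p⟩ = b`, and since `q̄` is the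
vertex average, `π_P p = p`; hence the stabilization term of `ã^E(p, v)` vanishes. For the
remaining term, `∇(π_C p) = b` and `∇(π_C v) = ⟨∇v⟩` are constant, and
`vol(E) ⟪b, ⟨∇v⟩⟫ = ∫_E ⟪b, ∇v⟫` because `∇v` is continuous on a neighbourhood of the
compact set `closure E`, hence integrable on `E`. -/

section Gradient

variable {F : Type*} [NormedAddCommGroup F] [InnerProductSpace ℝ F] [CompleteSpace F]

theorem hasGradientAt_const_add_inner (a : ℝ) (b x : F) :
    HasGradientAt (fun y => a + (inner ℝ b y : ℝ)) b x := by
  rw [hasGradientAt_iff_hasFDerivAt]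
  exact (innerSL ℝ b).hasFDerivAt.const_add a

theorem gradient_const_add_inner (a : ℝ) (b x : F) :
    gradient (fun y => a + (inner ℝ b y : ℝ)) x = b :=
  (hasGradientAt_const_add_inner a b x).gradient

theorem gradient_inner_sub (b c x : F) :
    gradient (fun y => (inner ℝ b (y - c) : ℝ)) x = b := by
  simpa only [inner_sub_right, neg_add_eq_sub] using
    gradient_const_add_inner (-(inner ℝ b c : ℝ)) b x

theorem ContDiffOn.continuousOn_gradient {f : F → ℝ} {U : Set F} (hf : ContDiffOn ℝ 1 f U)
    (hU : IsOpen U) : ContinuousOn (gradient f) U :=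
  (InnerProductSpace.toDual ℝ F).symm.continuous.comp_continuousOn
    (hf.continuousOn_fderiv_of_isOpen hU le_rfl)

theorem ContDiffOn.integrableOn_gradient [MeasurableSpace F] [BorelSpace F] {μ : Measure F}
    [IsFiniteMeasureOnCompacts μ] {f : F → ℝ} {U K : Set F} (hf : ContDiffOn ℝ 1 f U)
    (hU : IsOpen U) (hK : IsCompact K) (hKU : K ⊆ U) : IntegrableOn (gradient f) K μ :=
  ((hf.continuousOn_gradient hU).mono hKU).integrableOn_compact hK

end Gradient

local notation "ℝ²" => EuclideanSpace ℝ (Fin 2)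

section PatchTest

variable {E : Set ℝ²}

theorem meanGrad_const_add_inner (hE₀ : 0 < volume E) (hE : volume E ≠ ⊤) (a : ℝ) (b : ℝ²) :
    meanGrad E (fun y => a + (inner ℝ b y : ℝ)) = b := by
  have hvol : (volume E).toReal ≠ 0 := (ENNReal.toReal_pos hE₀.ne' hE).ne'
  simp only [meanGrad, gradient_const_add_inner, setIntegral_const, measureReal_def, smul_smul,
    inv_mul_cancel₀ hvol, one_smul]

theorem gradient_piC (c : ℝ²) (v : ℝ² → ℝ) (x : ℝ²) : gradient (piC E c v) x = meanGrad E v :=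
  gradient_inner_sub _ _ _

theorem setIntegral_inner_gradient (hE₀ : 0 < volume E) (hE : volume E ≠ ⊤) {v : ℝ² → ℝ}
    (hv : IntegrableOn (gradient v) E) (b : ℝ²) :
    ∫ x in E, (inner ℝ b (gradient v x) : ℝ) = (volume E).toReal * inner ℝ b (meanGrad E v) := by
  have hvol : (volume E).toReal ≠ 0 := (ENNReal.toReal_pos hE₀.ne' hE).ne'
  rw [meanGrad, real_inner_smul_right, ← integral_inner hv, mul_inv_cancel_left₀ hvol]

theorem piP_const_add_inner {n : ℕ} (hn : n ≠ 0) (q : Fin n → ℝ²) (hE₀ : 0 < volume E)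
    (hE : volume E ≠ ⊤) (a : ℝ) (b x : ℝ²) :
    piP E n q (fun y => a + (inner ℝ b y : ℝ)) x = a + inner ℝ b x := by
  have hn' : (n : ℝ) ≠ 0 := Nat.cast_ne_zero.mpr hn
  simp only [piP, piR, piC, meanGrad_const_add_inner hE₀ hE, Finset.sum_add_distrib,
    Finset.sum_const, Finset.card_univ, Fintype.card_fin, nsmul_eq_mul, ← inner_sum,
    inner_sub_right, real_inner_smul_right]
  field_simp
  ring

theorem aE_piC_const_add_inner (hE₀ : 0 < volume E) (hE : volume E ≠ ⊤) (γ : ℝ) (c : ℝ²)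
    {v : ℝ² → ℝ} (hv : IntegrableOn (gradient v) E) (a : ℝ) (b : ℝ²) :
    aE E γ (piC E c fun y => a + (inner ℝ b y : ℝ)) (piC E c v)
      = aE E γ (fun y => a + (inner ℝ b y : ℝ)) v := by
  simp only [aE, gradient_piC, meanGrad_const_add_inner hE₀ hE, gradient_const_add_inner,
    setIntegral_const, setIntegral_inner_gradient hE₀ hE hv, measureReal_def, smul_eq_mul]

theorem atildeE_const_add_inner {n : ℕ} (hn : n ≠ 0) (q : Fin n → ℝ²) (hE₀ : 0 < volume E)
    (hE : volume E ≠ ⊤) (γ α : ℝ) {v : ℝ² → ℝ} (hv : IntegrableOn (gradient v) E) (a : ℝ)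
    (b : ℝ²) :
    atildeE E γ α n q (fun y => a + (inner ℝ b y : ℝ)) v
      = aE E γ (fun y => a + (inner ℝ b y : ℝ)) v := by
  simp only [atildeE, aE_piC_const_add_inner hE₀ hE γ _ hv, piP_const_add_inner hn q hE₀ hE,
    sub_self, zero_mul, Finset.sum_const_zero, mul_zero, add_zero]

end PatchTest

theorem stmt18_general
    (E : Set (EuclideanSpace ℝ (Fin 2)))
    (hEb : Bornology.IsBounded E) (hEpos : 0 < volume E)
    (γ : ℝ)
    (n : ℕ) (hn : 1 ≤ n) (q : Fin n → EuclideanSpace ℝ (Fin 2))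
    (α : ℝ)
    (v : EuclideanSpace ℝ (Fin 2) → ℝ)
    (U : Set (EuclideanSpace ℝ (Fin 2))) (hU : IsOpen U) (hEU : closure E ⊆ U)
    (hv : ContDiffOn ℝ 1 v U) :
    (∀ (a : ℝ) (b : EuclideanSpace ℝ (Fin 2)),
      atildeE E γ α n q (fun x => a + (inner ℝ b x : ℝ)) v
        = aE E γ (fun x => a + (inner ℝ b x : ℝ)) v) ∧
    (∀ (a : ℝ) (b x : EuclideanSpace ℝ (Fin 2)),
      piP E n q (fun y => a + (inner ℝ b y : ℝ)) x = a + (inner ℝ b x : ℝ)) := by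
  have hn₀ : n ≠ 0 := Nat.one_le_iff_ne_zero.mp hn
  have hE : volume E ≠ ⊤ := hEb.measure_lt_top.ne
  have hgrad : IntegrableOn (gradient v) E :=
    (hv.integrableOn_gradient hU hEb.isCompact_closure hEU).mono_set subset_closure
  exact ⟨atildeE_const_add_inner hn₀ q hEpos hE γ α hgrad,
    piP_const_add_inner hn₀ q hEpos hE⟩

/-- Polynomial consistency (the "patch test") of the stabilized Virtual Element
bilinear form: `ã^E(p, v) = a^E(p, v)` for every affine `p`; in particular
`π_P p = p` for every affine `p`. -/
theorem stmt18
    (E : Set (EuclideanSpace ℝ (Fin 2))) (hEo : IsOpen E)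
    (hEb : Bornology.IsBounded E) (hEpos : 0 < volume E)
    (γ : ℝ) (hγ : 0 < γ)
    (n : ℕ) (hn : 1 ≤ n) (q : Fin n → EuclideanSpace ℝ (Fin 2))
    (α : ℝ)
    (v : EuclideanSpace ℝ (Fin 2) → ℝ)
    (U : Set (EuclideanSpace ℝ (Fin 2))) (hU : IsOpen U) (hEU : closure E ⊆ U)
    (hv : ContDiffOn ℝ 1 v U) :
    (∀ (a : ℝ) (b : EuclideanSpace ℝ (Fin 2)),
      atildeE E γ α n q (fun x => a + (inner ℝ b x : ℝ)) v
        = aE E γ (fun x => a + (inner ℝ b x : ℝ)) v) ∧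
    (∀ (a : ℝ) (b x : EuclideanSpace ℝ (Fin 2)),
      piP E n q (fun y => a + (inner ℝ b y : ℝ)) x = a + (inner ℝ b x : ℝ)) :=
  stmt18_general E hEb hEpos γ n hn q α v U hU hEU hv
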